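/- Let V: ℝⁿ × [0,T] → ℝ be continuously differentiable and a classical solution of the HJB equation −∂V/∂t = f·∇ₓV − ½|g(x)ᵀ∇ₓV|². Let u: [t,T] → ℝᵐ be continuous and let x: [t,T] → ℝⁿ be differentiable with x′(s) = f(x(s)) + g(x(s))u(s) for all s. Then V(x(t),t) = ½∫ₜᵀ |u(s)|² ds + V(x(T),T) holds if and only if u(s) = −g(x(s))ᵀ∇ₓV(x(s),s) for all s ∈ [t,T]; in particular the feedback control u*(s) = −g(x(s))ᵀ∇ₓV(x(s),s) attains equality. -/

import Mathlib

/-! Along the trajectory, the HJB equation turns the derivative of `s ↦ V(x(s), s)` into a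
completed square: `d/ds V(x(s), s) = ½|u + gᵀ∇ₓV|² - ½|u|²`. Integrating over `[t, T]`, the
equality holds iff `∫ₜᵀ |u + gᵀ∇ₓV|² = 0`, i.e. iff the continuous nonnegative integrand
vanishes on `[t, T]`. -/

open Matrix

/-- The continuous linear map `(v, τ) ↦ a ⬝ᵥ v + b * τ`, representing the total
derivative of a function `V(x,t)` with spatial gradient `a` and time derivative `b`. -/
noncomputable def pairDerivCLM {n : ℕ} (a : Fin n → ℝ) (b : ℝ) :
    ((Fin n → ℝ) × ℝ) →L[ℝ] ℝ :=
  LinearMap.toContinuousLinearMap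
    { toFun := fun vτ => a ⬝ᵥ vτ.1 + b * vτ.2
      map_add' := by intro v w; simp [dotProduct_add]; ring
      map_smul' := by intro c v; simp [dotProduct_smul]; ring }

open Set MeasureTheory

theorem pairDerivCLM_apply {n : ℕ} (a v : Fin n → ℝ) (b τ : ℝ) :
    pairDerivCLM a b (v, τ) = a ⬝ᵥ v + b * τ :=
  rfl

theorem HasFDerivAt.hasDerivAt_comp_pairDerivCLM {n : ℕ} {V : (Fin n → ℝ) → ℝ → ℝ}
    {x : ℝ → Fin n → ℝ} {a v : Fin n → ℝ} {b s : ℝ}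
    (hV : HasFDerivAt (fun p : (Fin n → ℝ) × ℝ => V p.1 p.2) (pairDerivCLM a b) (x s, s))
    (hx : HasDerivAt x v s) :
    HasDerivAt (fun r => V (x r) r) (a ⬝ᵥ v + b) s := by
  have := hV.comp_hasDerivAt (f := fun r => (x r, r)) s (hx.prodMk (hasDerivAt_id s))
  rwa [pairDerivCLM_apply, mul_one] at this

theorem two_mul_dotProduct_mulVec_add_dotProduct_self {R : Type*} [CommRing R]
    {ι κ : Type*} [Fintype ι] [Fintype κ] (G : Matrix ι κ R) (p : ι → R) (u : κ → R) :
    2 * (p ⬝ᵥ G *ᵥ u) + (Gᵀ *ᵥ p) ⬝ᵥ (Gᵀ *ᵥ p)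
      = (u + Gᵀ *ᵥ p) ⬝ᵥ (u + Gᵀ *ᵥ p) - u ⬝ᵥ u := by
  have : p ⬝ᵥ G *ᵥ u = u ⬝ᵥ Gᵀ *ᵥ p := by
    rw [dotProduct_mulVec, ← mulVec_transpose, dotProduct_comm]
  rw [this, add_dotProduct, dotProduct_add, dotProduct_add, dotProduct_comm (Gᵀ *ᵥ p) u]
  ring

theorem hasDerivAt_value_of_hjb {n m : ℕ} {V : (Fin n → ℝ) → ℝ → ℝ}
    {x : ℝ → Fin n → ℝ} {a F : Fin n → ℝ} {G : Matrix (Fin n) (Fin m) ℝ} {u : Fin m → ℝ}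
    {b s : ℝ}
    (hV : HasFDerivAt (fun p : (Fin n → ℝ) × ℝ => V p.1 p.2) (pairDerivCLM a b) (x s, s))
    (hHJB : -b = F ⬝ᵥ a - (1/2) * ((Gᵀ *ᵥ a) ⬝ᵥ (Gᵀ *ᵥ a)))
    (hx : HasDerivAt x (F + G *ᵥ u) s) :
    HasDerivAt (fun r => V (x r) r)
      ((1/2) * ((u + Gᵀ *ᵥ a) ⬝ᵥ (u + Gᵀ *ᵥ a)) - (1/2) * (u ⬝ᵥ u)) s := by
  convert hV.hasDerivAt_comp_pairDerivCLM hx using 1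
  have := two_mul_dotProduct_mulVec_add_dotProduct_self G a u
  rw [dotProduct_add a F, dotProduct_comm a F]
  linarith

protected theorem ContinuousOn.dotProduct {X R ι : Type*} [TopologicalSpace X]
    [TopologicalSpace R] [Fintype ι] [Mul R] [AddCommMonoid R] [ContinuousAdd R]
    [ContinuousMul R] {A B : X → ι → R} {S : Set X} (hA : ContinuousOn A S)
    (hB : ContinuousOn B S) :
    ContinuousOn (fun x => A x ⬝ᵥ B x) S :=
  (continuous_fst.dotProduct continuous_snd).comp_continuousOn (hA.prodMk hB)

theorem ContinuousOn.matrix_mulVec {X R ι κ : Type*} [TopologicalSpace X] [TopologicalSpace R]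
    [Fintype κ] [NonUnitalNonAssocSemiring R] [ContinuousAdd R] [ContinuousMul R]
    {A : X → Matrix ι κ R} {B : X → κ → R} {S : Set X} (hA : ContinuousOn A S)
    (hB : ContinuousOn B S) :
    ContinuousOn (fun x => A x *ᵥ B x) S :=
  (continuous_fst.matrix_mulVec continuous_snd).comp_continuousOn (hA.prodMk hB)

theorem intervalIntegral_eq_zero_iff_eqOn_of_nonneg {h : ℝ → ℝ} {a b : ℝ} (hab : a < b)
    (hc : ContinuousOn h (Icc a b)) (hnn : ∀ s ∈ Icc a b, 0 ≤ h s) :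
    ∫ s in a..b, h s = 0 ↔ EqOn h 0 (Icc a b) := by
  have hIcc : uIcc a b = Icc a b := uIcc_of_le hab.le
  constructor
  · intro h0
    have hnn_ae : 0 ≤ᵐ[volume.restrict (Ioc a b)] h :=
      (ae_restrict_of_forall_mem measurableSet_Ioc
        fun s hs => hnn s (Ioc_subset_Icc_self hs))
    have hae := (intervalIntegral.integral_eq_zero_iff_of_le_of_nonneg_ae hab.le hnn_ae
      (hIcc ▸ hc).intervalIntegrable).mp h0
    rw [Measure.restrict_congr_set Ioc_ae_eq_Icc] at hae
    refine Measure.eqOn_of_ae_eq hae hc continuousOn_const ?_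
    rw [interior_Icc, closure_Ioo hab.ne]
  · intro h0
    rw [intervalIntegral.integral_congr (hIcc ▸ h0)]
    simp

theorem hjb_equality_iff_feedback_control_general
    (n m : ℕ) (T t : ℝ) (ht : 0 ≤ t) (hT : t < T)
    (f : (Fin n → ℝ) → (Fin n → ℝ)) (g : (Fin n → ℝ) → Matrix (Fin n) (Fin m) ℝ)
    (hg : Continuous g)
    (V Vt : (Fin n → ℝ) → ℝ → ℝ) (gradV : (Fin n → ℝ) → ℝ → (Fin n → ℝ))
    -- `V` is differentiable with spatial gradient `gradV` and time derivative `Vt` ...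
    (hV : ∀ (x : Fin n → ℝ), ∀ s ∈ Set.Icc (0 : ℝ) T,
      HasFDerivAt (fun p : (Fin n → ℝ) × ℝ => V p.1 p.2)
        (pairDerivCLM (gradV x s) (Vt x s)) (x, s))
    -- ... and continuously so:
    (hC1 : ContinuousOn (fun p : (Fin n → ℝ) × ℝ => (gradV p.1 p.2, Vt p.1 p.2))
      ((Set.univ : Set (Fin n → ℝ)) ×ˢ Set.Icc (0 : ℝ) T))
    -- `V` is a classical solution of the HJB equation `-∂V/∂t = f·∇ₓV - ½|gᵀ∇ₓV|²`:
    (hHJB : ∀ (x : Fin n → ℝ), ∀ s ∈ Set.Icc (0 : ℝ) T,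
      -(Vt x s) = f x ⬝ᵥ gradV x s
        - (1/2) * (((g x)ᵀ *ᵥ gradV x s) ⬝ᵥ ((g x)ᵀ *ᵥ gradV x s)))
    -- a continuous control and a corresponding trajectory:
    (u : ℝ → Fin m → ℝ) (hu : ContinuousOn u (Set.Icc t T))
    (x : ℝ → Fin n → ℝ)
    (hx : ∀ s ∈ Set.Icc t T, HasDerivAt x (f (x s) + (g (x s)) *ᵥ u s) s) :
    (V (x t) t = (1/2) * (∫ s in t..T, u s ⬝ᵥ u s) + V (x T) T ↔
      ∀ s ∈ Set.Icc t T, u s = -((g (x s))ᵀ *ᵥ gradV (x s) s)) := by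
  set w : ℝ → Fin m → ℝ := fun s => (g (x s))ᵀ *ᵥ gradV (x s) s
  set h : ℝ → ℝ := fun s => (u s + w s) ⬝ᵥ (u s + w s)
  have hIcc : Icc t T ⊆ Icc 0 T := Icc_subset_Icc_left ht
  have huIcc : uIcc t T = Icc t T := uIcc_of_le hT.le
  have hxc : ContinuousOn x (Icc t T) := fun s hs => (hx s hs).continuousAt.continuousWithinAt
  have hgradc : ContinuousOn (fun s => gradV (x s) s) (Icc t T) :=
    continuous_fst.comp_continuousOn
      (hC1.comp (hxc.prodMk continuousOn_id) fun s hs => ⟨mem_univ _, hIcc hs⟩)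
  have hwc : ContinuousOn w (Icc t T) :=
    (hg.matrix_transpose.comp_continuousOn hxc).matrix_mulVec hgradc
  have hhc : ContinuousOn h (Icc t T) := (hu.add hwc).dotProduct (hu.add hwc)
  have huc : ContinuousOn (fun s => u s ⬝ᵥ u s) (Icc t T) := hu.dotProduct hu
  have hFTC : ∫ s in t..T, ((1/2) * h s - (1/2) * (u s ⬝ᵥ u s)) = V (x T) T - V (x t) t :=
    intervalIntegral.integral_eq_sub_of_hasDerivAt
      (fun s hs => hasDerivAt_value_of_hjb (hV _ s (hIcc (huIcc ▸ hs)))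
        (hHJB _ s (hIcc (huIcc ▸ hs))) (hx s (huIcc ▸ hs)))
      (huIcc ▸ (hhc.const_smul (1/2 : ℝ)).sub (huc.const_smul (1/2 : ℝ))).intervalIntegrable
  rw [intervalIntegral.integral_sub ((huIcc ▸ hhc).intervalIntegrable.const_mul _)
      ((huIcc ▸ huc).intervalIntegrable.const_mul _),
    intervalIntegral.integral_const_mul, intervalIntegral.integral_const_mul] at hFTC
  calc V (x t) t = (1/2) * (∫ s in t..T, u s ⬝ᵥ u s) + V (x T) T ↔ ∫ s in t..T, h s = 0 := by
        constructor <;> intro <;> linarith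
    _ ↔ EqOn h 0 (Icc t T) := intervalIntegral_eq_zero_iff_eqOn_of_nonneg hT hhc
        fun s _ => dotProduct_self_star_nonneg _
    _ ↔ ∀ s ∈ Icc t T, u s = -w s :=
        forall₂_congr fun s _ => by
          simp only [h, Pi.zero_apply, dotProduct_self_eq_zero, add_eq_zero_iff_eq_neg]

/-- Along a solution of the control system `x' = f(x) + g(x)u`, a classical solution `V`
of the HJB equation `-∂V/∂t = f·∇ₓV - ½|gᵀ∇ₓV|²` satisfies
`V(x(t),t) = ½∫ₜᵀ |u(s)|² ds + V(x(T),T)` if and only if `u` is the feedback control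
`u(s) = -g(x(s))ᵀ∇ₓV(x(s),s)` on `[t,T]`; in particular the feedback control attains
equality. -/
theorem hjb_equality_iff_feedback_control
    (n m : ℕ) (T t : ℝ) (ht : 0 ≤ t) (hT : t < T)
    (f : (Fin n → ℝ) → (Fin n → ℝ)) (g : (Fin n → ℝ) → Matrix (Fin n) (Fin m) ℝ)
    (hf : Continuous f) (hg : Continuous g)
    (V Vt : (Fin n → ℝ) → ℝ → ℝ) (gradV : (Fin n → ℝ) → ℝ → (Fin n → ℝ))
    -- `V` is differentiable with spatial gradient `gradV` and time derivative `Vt` ...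
    (hV : ∀ (x : Fin n → ℝ), ∀ s ∈ Set.Icc (0 : ℝ) T,
      HasFDerivAt (fun p : (Fin n → ℝ) × ℝ => V p.1 p.2)
        (pairDerivCLM (gradV x s) (Vt x s)) (x, s))
    -- ... and continuously so:
    (hC1 : ContinuousOn (fun p : (Fin n → ℝ) × ℝ => (gradV p.1 p.2, Vt p.1 p.2))
      ((Set.univ : Set (Fin n → ℝ)) ×ˢ Set.Icc (0 : ℝ) T))
    -- `V` is a classical solution of the HJB equation `-∂V/∂t = f·∇ₓV - ½|gᵀ∇ₓV|²`:
    (hHJB : ∀ (x : Fin n → ℝ), ∀ s ∈ Set.Icc (0 : ℝ) T,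
      -(Vt x s) = f x ⬝ᵥ gradV x s
        - (1/2) * (((g x)ᵀ *ᵥ gradV x s) ⬝ᵥ ((g x)ᵀ *ᵥ gradV x s)))
    -- a continuous control and a corresponding trajectory:
    (u : ℝ → Fin m → ℝ) (hu : ContinuousOn u (Set.Icc t T))
    (x : ℝ → Fin n → ℝ)
    (hx : ∀ s ∈ Set.Icc t T, HasDerivAt x (f (x s) + (g (x s)) *ᵥ u s) s) :
    (V (x t) t = (1/2) * (∫ s in t..T, u s ⬝ᵥ u s) + V (x T) T ↔
      ∀ s ∈ Set.Icc t T, u s = -((g (x s))ᵀ *ᵥ gradV (x s) s)) :=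
  hjb_equality_iff_feedback_control_general n m T t ht hT f g hg V Vt gradV hV hC1 hHJB u hu x hx
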